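/- For every σ ∈ (0,1) there exists a ∈ (0,1) with I(a) = σ; that is, the function I : (0,1) → ℝ, I(a) := 8a/(a + s(a))³, attains every value in (0,1). -/
import Mathlib


open Real

/-- `s a = arcsin (√(1 - a²)) / √(1 - a²)`. -/
noncomputable def sAux (a : ℝ) : ℝ := arcsin (Real.sqrt (1 - a ^ 2)) / Real.sqrt (1 - a ^ 2)

/-- Isoperimetric ratio of the prolate spheroid with semi-axes `(a, a, 1)`. -/
noncomputable def isoRatio (a : ℝ) : ℝ := 8 * a / (a + sAux a) ^ 3

lemma one_le_sAux {a : ℝ} (ha : a ∈ Set.Ioo (0:ℝ) 1) : 1 ≤ sAux a := by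
  obtain ⟨h0, h1⟩ := ha
  have hsq : (0:ℝ) < 1 - a ^ 2 := by nlinarith
  set t := Real.sqrt (1 - a ^ 2) with ht
  have htpos : 0 < t := Real.sqrt_pos.2 hsq
  have ht1 : t ≤ 1 := Real.sqrt_le_one.2 (by nlinarith)
  have : t ≤ arcsin t := by
    nlinarith [Real.sin_le (Real.arcsin_nonneg.2 htpos.le),
      Real.sin_arcsin (by linarith : (-1:ℝ) ≤ t) ht1]
  rw [sAux, ← ht, le_div_iff₀ htpos]
  linarith

lemma continuousOn_isoRatio : ContinuousOn isoRatio (Set.Ioo (0:ℝ) 1) := by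
  intro a ha
  obtain ⟨h0, h1⟩ := ha
  have hsq : (0:ℝ) < 1 - a ^ 2 := by nlinarith
  have hc : ContinuousAt (fun x : ℝ => Real.sqrt (1 - x ^ 2)) a :=
    ((continuous_const.sub (continuous_pow 2)).sqrt).continuousAt
  have hs : ContinuousAt sAux a := by
    exact (Real.continuous_arcsin.continuousAt.comp hc).div hc
      (ne_of_gt (Real.sqrt_pos.2 hsq))
  have h1s : 1 ≤ sAux a := one_le_sAux ⟨h0, h1⟩
  have hden : (a + sAux a) ^ 3 ≠ 0 := by positivity
  exact (((continuousAt_const.mul continuousAt_id).div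
    (((continuousAt_id.add hs)).pow 3) hden)).continuousWithinAt

lemma tendsto_sAux : Filter.Tendsto sAux (nhdsWithin 1 (Set.Ioo (0:ℝ) 1)) (nhds 1) := by
  have h1 : Filter.Tendsto (fun a : ℝ => Real.sqrt (1 - a ^ 2))
      (nhdsWithin 1 (Set.Ioo (0:ℝ) 1)) (nhdsWithin 0 {(0:ℝ)}ᶜ) := by
    rw [tendsto_nhdsWithin_iff]
    constructor
    · have : Filter.Tendsto (fun a : ℝ => Real.sqrt (1 - a ^ 2)) (nhds 1) (nhds 0) := by
        have hc : Continuous fun x : ℝ => Real.sqrt (1 - x ^ 2) :=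
          (continuous_const.sub (continuous_pow 2)).sqrt
        have := hc.tendsto (1:ℝ)
        simpa using this
      exact this.mono_left nhdsWithin_le_nhds
    · filter_upwards [eventually_mem_nhdsWithin] with x hx
      have hsq : (0:ℝ) < 1 - x ^ 2 := by nlinarith [hx.1, hx.2]
      exact ne_of_gt (Real.sqrt_pos.2 hsq)
  have h2 : Filter.Tendsto (slope arcsin 0) (nhdsWithin 0 {(0:ℝ)}ᶜ) (nhds 1) := by
    have hd : HasDerivAt arcsin 1 0 := by
      have := Real.hasDerivAt_arcsin (by norm_num) (by norm_num : (0:ℝ) ≠ 1)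
      simpa using this
    exact hasDerivAt_iff_tendsto_slope.1 hd
  have := h2.comp h1
  refine this.congr fun a => ?_
  simp [Function.comp, slope_def_field, sAux, Real.arcsin_zero]

lemma tendsto_isoRatio : Filter.Tendsto isoRatio (nhdsWithin 1 (Set.Ioo (0:ℝ) 1)) (nhds 1) := by
  have hid : Filter.Tendsto (fun a : ℝ => a) (nhdsWithin 1 (Set.Ioo (0:ℝ) 1)) (nhds 1) :=
    Filter.tendsto_id.mono_left nhdsWithin_le_nhds
  have h : Filter.Tendsto isoRatio (nhdsWithin 1 (Set.Ioo (0:ℝ) 1))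
      (nhds (8 * 1 / (1 + 1) ^ 3)) :=
    ((tendsto_const_nhds.mul hid).div ((hid.add tendsto_sAux).pow 3) (by norm_num))
  have he : (8:ℝ) * 1 / (1 + 1) ^ 3 = 1 := by norm_num
  rwa [he] at h

theorem isoRatio_surjective :
    ∀ σ ∈ Set.Ioo (0 : ℝ) 1, ∃ a ∈ Set.Ioo (0 : ℝ) 1, isoRatio a = σ := by
  rintro σ ⟨hσ0, hσ1⟩
  set a₀ : ℝ := σ / 8 with ha₀def
  have ha₀ : a₀ ∈ Set.Ioo (0:ℝ) 1 := ⟨by positivity, by rw [ha₀def]; linarith⟩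
  have hI₀ : isoRatio a₀ < σ := by
    have h1s := one_le_sAux ha₀
    have hden : 1 < (a₀ + sAux a₀) ^ 3 := by
      have h2 : 1 < a₀ + sAux a₀ := by linarith [ha₀.1]
      exact one_lt_pow₀ h2 (by norm_num)
    have : isoRatio a₀ = σ / (a₀ + sAux a₀) ^ 3 := by
      rw [isoRatio, ha₀def]; ring_nf
    rw [this]
    exact div_lt_self hσ0 hden
  -- find a₁ close to 1 with isoRatio a₁ > σ
  haveI := right_nhdsWithin_Ioo_neBot (zero_lt_one (α := ℝ))
  have hev : ∀ᶠ x in nhdsWithin 1 (Set.Ioo (0:ℝ) 1), σ < isoRatio x :=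
    tendsto_isoRatio.eventually (eventually_gt_nhds hσ1)
  obtain ⟨a₁, hgt, ha₁⟩ := (hev.and eventually_mem_nhdsWithin).exists
  have hsub : Set.uIcc a₀ a₁ ⊆ Set.Ioo (0:ℝ) 1 :=
    Set.ordConnected_Ioo.uIcc_subset ha₀ ha₁
  have hcont : ContinuousOn isoRatio (Set.uIcc a₀ a₁) := continuousOn_isoRatio.mono hsub
  have hmem : σ ∈ Set.uIcc (isoRatio a₀) (isoRatio a₁) :=
    Set.Icc_subset_uIcc ⟨le_of_lt hI₀, le_of_lt hgt⟩
  obtain ⟨a, has, hfa⟩ := intermediate_value_uIcc hcont hmem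
  exact ⟨a, hsub has, hfa⟩
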